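/- Let q be a prime power and k \le n positive integers. Then \sum_{l=0}^{k} q^{l(l-1)} \binom{k}{l}_q \prod_{i=l+1}^{k} (q^n - q^i) = q^{n(k-1)}(q^n - q^k + 1). -/

import Mathlib

/-!
Write `S_k(y)` for the sum with `q^n` replaced by `y`. Splitting each Gaussian binomial by the
Pascal rule `[k+1, l+1]_q = q^(k-l) [k, l]_q + [k, l+1]_q` and pulling a factor `q` out of each
`q y - q^i` gives `S_{k+1}(q y) = (q y - q^(k+1)) S_k(q y) + q^(2k) S_k(y)`, a recursion that
`y^(k-1) (y - q^k + 1)` also satisfies. Evaluating only at powers `y = q^n` keeps the induction on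
`k` free of division by `q`.
-/

open Finset

/-- The Gaussian binomial coefficient `[d choose j]_q`, defined via the q-Pascal recursion. -/
def qb {R : Type*} [CommRing R] (q : R) : ℕ → ℕ → R
  | _, 0 => 1
  | 0, _ + 1 => 0
  | n + 1, k + 1 => qb q n k + q ^ (k + 1) * qb q n (k + 1)

section

variable {R : Type*} [CommRing R] (q : R)

@[simp]
theorem qb_zero_right (n : ℕ) : qb q n 0 = 1 := by
  cases n <;> rfl

theorem qb_succ_succ (n k : ℕ) : qb q (n + 1) (k + 1) = qb q n k + q ^ (k + 1) * qb q n (k + 1) :=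
  rfl

theorem qb_eq_zero_of_lt {n k : ℕ} (h : n < k) : qb q n k = 0 := by
  induction n generalizing k with
  | zero => obtain ⟨k, rfl⟩ := Nat.exists_eq_add_one.mpr h; rfl
  | succ n ih =>
    obtain ⟨k, rfl⟩ := Nat.exists_eq_add_one.mpr (Nat.zero_lt_of_lt h)
    rw [qb_succ_succ, ih (by omega), ih (by omega), mul_zero, add_zero]

theorem qb_add_succ_succ (n k : ℕ) :
    qb q (n + k + 1) (k + 1) = q ^ n * qb q (n + k) k + qb q (n + k) (k + 1) := by
  induction n generalizing k with
  | zero => simp [qb_succ_succ, qb_eq_zero_of_lt q (Nat.lt_succ_self k)]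
  | succ n ih =>
    induction k with
    | zero =>
      have h : qb q (n + 1) 1 = q ^ n + qb q n 1 := by simpa using ih 0
      have d1 : qb q (n + 1) 1 = 1 + q * qb q n 1 := by simpa using qb_succ_succ q n 0
      have d2 : qb q (n + 2) 1 = 1 + q * qb q (n + 1) 1 := by
        simpa using qb_succ_succ q (n + 1) 0
      simp only [add_zero, qb_zero_right, mul_one]
      linear_combination d2 + q * h - d1
    | succ k ihk =>
      have h : qb q (n + k + 2) (k + 2) =
          q ^ n * qb q (n + k + 1) (k + 1) + qb q (n + k + 1) (k + 2) := ih (k + 1)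
      rw [show n + 1 + k = n + k + 1 by ring] at ihk
      rw [show n + 1 + (k + 1) = n + k + 2 by ring]
      linear_combination qb_succ_succ q (n + k + 2) (k + 1) + ihk
        - q ^ (n + 1) * qb_succ_succ q (n + k + 1) k + q ^ (k + 2) * h
        - qb_succ_succ q (n + k + 1) (k + 1)

theorem qb_succ_succ_of_le {n k : ℕ} (h : k ≤ n) :
    qb q (n + 1) (k + 1) = q ^ (n - k) * qb q n k + qb q n (k + 1) := by
  obtain ⟨d, rfl⟩ := Nat.exists_eq_add_of_le' h
  rw [Nat.add_sub_cancel, qb_add_succ_succ]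

/-- At `y = q^n` over `𝔽_q` this counts the linear maps from a `k`-dimensional subspace of
`𝔽_q^n` to `𝔽_q^n` that extend to a nilpotent operator. -/
def nilpotentExtensionSum (y : R) (k : ℕ) : R :=
  ∑ l ∈ range (k + 1), q ^ (l * (l - 1)) * qb q k l * ∏ i ∈ Icc (l + 1) k, (y - q ^ i)

theorem prod_Icc_succ_mul_sub_pow (y : R) (a b : ℕ) :
    ∏ i ∈ Icc (a + 1) (b + 1), (q * y - q ^ i) =
      q ^ (b + 1 - a) * ∏ i ∈ Icc a b, (y - q ^ i) := by
  rw [← map_add_right_Icc, prod_map, ← Nat.card_Icc, ← prod_const, ← prod_mul_distrib]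
  refine prod_congr rfl fun i _ => ?_
  simp only [addRightEmbedding_apply]
  ring

theorem nilpotentExtensionSum_mul_succ (y : R) (k : ℕ) :
    nilpotentExtensionSum q (q * y) (k + 1) =
      (q * y - q ^ (k + 1)) * nilpotentExtensionSum q (q * y) k +
        q ^ (2 * k) * nilpotentExtensionSum q y k := by
  have hsplit : ∀ m ∈ range (k + 1),
      q ^ ((m + 1) * (m + 1 - 1)) * qb q (k + 1) (m + 1) *
          ∏ i ∈ Icc (m + 1 + 1) (k + 1), (q * y - q ^ i) =
        q ^ ((m + 1) * (m + 1 - 1)) * qb q k (m + 1) *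
            ∏ i ∈ Icc (m + 1 + 1) (k + 1), (q * y - q ^ i) +
          q ^ (2 * k) * (q ^ (m * (m - 1)) * qb q k m * ∏ i ∈ Icc (m + 1) k, (y - q ^ i)) := by
    intro m hm
    obtain ⟨d, rfl⟩ := Nat.exists_eq_add_of_le' (Nat.lt_succ_iff.mp (mem_range.mp hm))
    rw [qb_succ_succ_of_le q (Nat.le_add_left m d), prod_Icc_succ_mul_sub_pow,
      show d + m + 1 - (m + 1) = d by omega, Nat.add_sub_cancel (n := d)]
    have hexp : (m + 1) * (m + 1 - 1) + d + d = 2 * (d + m) + m * (m - 1) := by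
      cases m <;> simp only [Nat.add_sub_cancel] <;> ring_nf
    have hpow : q ^ ((m + 1) * (m + 1 - 1)) * q ^ d * q ^ d =
        q ^ (2 * (d + m)) * q ^ (m * (m - 1)) := by
      rw [← pow_add, ← pow_add, ← pow_add, hexp]
    linear_combination (qb q (d + m) m * ∏ i ∈ Icc (m + 1) (d + m), (y - q ^ i)) * hpow
  have hzero : qb q (k + 1) 0 = qb q k 0 := by simp only [qb_zero_right]
  unfold nilpotentExtensionSum
  rw [sum_range_succ', sum_congr rfl hsplit, sum_add_distrib, ← mul_sum, add_right_comm, hzero,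
    ← sum_range_succ'
      (fun l => q ^ (l * (l - 1)) * qb q k l * ∏ i ∈ Icc (l + 1) (k + 1), (q * y - q ^ i)),
    sum_range_succ, qb_eq_zero_of_lt q (Nat.lt_succ_self k), mul_zero, zero_mul, add_zero]
  congr 1
  rw [mul_sum]
  refine sum_congr rfl fun l hl => ?_
  rw [prod_Icc_succ_top (by simpa using hl)]
  ring

theorem nilpotentExtensionSum_pow {k n : ℕ} (hk : 0 < k) (hkn : k ≤ n + 1) :
    nilpotentExtensionSum q (q ^ n) k = q ^ (n * (k - 1)) * (q ^ n - q ^ k + 1) := by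
  induction k, hk using Nat.le_induction generalizing n with
  | base =>
    simp [nilpotentExtensionSum, sum_range_succ, qb_succ_succ, qb_eq_zero_of_lt q Nat.zero_lt_one]
  | succ k hk ih =>
    obtain ⟨n, rfl⟩ : ∃ n', n = n' + 1 := Nat.exists_eq_add_one.mpr (by omega)
    obtain ⟨j, rfl⟩ : ∃ j, k = j + 1 := Nat.exists_eq_add_one.mpr hk
    rw [pow_succ', nilpotentExtensionSum_mul_succ, ← pow_succ', ih (by omega), ih (by omega)]
    simp only [Nat.add_sub_cancel]
    ring

end

theorem stmt4_general (q n k : ℕ) (hk : 0 < k) (hkn : k ≤ n) :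
    ∑ l ∈ range (k + 1), (q : ℤ) ^ (l * (l - 1)) * qb (q : ℤ) k l *
        ∏ i ∈ Icc (l + 1) k, ((q : ℤ) ^ n - (q : ℤ) ^ i) =
      (q : ℤ) ^ (n * (k - 1)) * ((q : ℤ) ^ n - (q : ℤ) ^ k + 1) :=
  nilpotentExtensionSum_pow (q : ℤ) hk (by omega)

theorem stmt4 (q p m n k : ℕ) (hp : p.Prime) (hm : 0 < m) (hq : q = p ^ m)
    (hk : 0 < k) (hkn : k ≤ n) :
    ∑ l ∈ range (k + 1), (q : ℤ) ^ (l * (l - 1)) * qb (q : ℤ) k l *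
        ∏ i ∈ Icc (l + 1) k, ((q : ℤ) ^ n - (q : ℤ) ^ i) =
      (q : ℤ) ^ (n * (k - 1)) * ((q : ℤ) ^ n - (q : ℤ) ^ k + 1) :=
  stmt4_general q n k hk hkn
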